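/- Let x = ρ_h B_{rec} > 1. Then ln 𝒩(ℋ_{ESN,t}, ε, ‖·‖) ≤ (ρ_y² ρ_h² B_{in}² B_X² B_{out}² d_y / ε²) · ((x^t − 1)/(x − 1))² · ln(2 d_h d_y), given: σ_h is ρ_h-Lipschitz with σ_h(0)=0, σ_y is ρ_y-Lipschitz with σ_y(0)=0, fixed input and recurrent matrices with ‖W_in‖_F ≤ B_{in}, ‖W_rec‖_F ≤ B_{rec}, trainable W_out with ‖W_out‖_F ≤ B_{out}, inputs bounded by B_X, and Lemma: ln 𝒩({W Z : ‖W‖_F ≤ a}, ε, ‖·‖₂) ≤ (a² b² m / ε²) ln(2dm) whenever ‖Z‖_F ≤ b, W ∈ ℝ^{m×d}. -/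

import Mathlib

/-- Frobenius norm of a real matrix. -/
noncomputable def frob {p q : ℕ} (A : Matrix (Fin p) (Fin q) ℝ) : ℝ :=
  Real.sqrt (∑ i, ∑ j, (A i j) ^ 2)

/-- `S` admits an ε-cover of cardinality `N` in Euclidean norm. -/
def HasCover {m : ℕ} (S : Set (EuclideanSpace ℝ (Fin m))) (ε : ℝ) (N : ℕ) : Prop :=
  ∃ v : Fin N → EuclideanSpace ℝ (Fin m), ∀ s ∈ S, ∃ i, ‖s - v i‖ ≤ ε

/-!
With `x = ρh Brec`, the hidden states obey `‖H (n+1)‖ ≤ ρh Bin BX + x ‖H n‖`, so `‖H t‖` is at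
most `ρh Bin BX` times the geometric sum `∑_{k<t} x^k = (x^t - 1)/(x - 1)`. The output class is
the image under the `ρy`-Lipschitz map `σy` of the linear class `{W (H t) : ‖W‖_F ≤ Bout}`, so an
`ε/ρy`-cover of the latter, given by the linear-predictor lemma, maps to an `ε`-cover of the
former. When `ρy ≤ 0` the map `σy` is constant and a single point covers.
-/

open Finset Matrix

lemma frob_nonneg {p q : ℕ} (A : Matrix (Fin p) (Fin q) ℝ) : 0 ≤ frob A :=
  Real.sqrt_nonneg _

lemma norm_toLp_mulVec_le_frob_mul {m n : ℕ} (A : Matrix (Fin m) (Fin n) ℝ)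
    (v : EuclideanSpace ℝ (Fin n)) :
    ‖(WithLp.toLp 2 (A *ᵥ v) : EuclideanSpace ℝ (Fin m))‖ ≤ frob A * ‖v‖ := by
  rw [EuclideanSpace.norm_eq, EuclideanSpace.norm_eq, frob, ← Real.sqrt_mul (by positivity)]
  apply Real.sqrt_le_sqrt
  simp only [Real.norm_eq_abs, sq_abs]
  rw [Finset.sum_mul]
  exact Finset.sum_le_sum fun i _ => Finset.sum_mul_sq_le_sq_mul_sq univ (A i) v

section Lipschitz

variable {E F : Type*} [SeminormedAddCommGroup E] [NormedAddCommGroup F]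
  {f : E → F} {ρ : ℝ}

lemma norm_le_mul_norm_of_lipschitz_of_map_zero (hf : ∀ a b, ‖f a - f b‖ ≤ ρ * ‖a - b‖)
    (h0 : f 0 = 0) (a : E) : ‖f a‖ ≤ ρ * ‖a‖ := by
  simpa [h0] using hf a 0

lemma map_eq_map_zero_of_lipschitz_of_nonpos (hf : ∀ a b, ‖f a - f b‖ ≤ ρ * ‖a - b‖)
    (hρ : ρ ≤ 0) (a : E) : f a = f 0 := by
  rw [← sub_eq_zero, ← norm_le_zero_iff]
  exact (hf a 0).trans (mul_nonpos_of_nonpos_of_nonneg hρ (norm_nonneg _))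

end Lipschitz

section Cover

variable {m : ℕ} {S T : Set (EuclideanSpace ℝ (Fin m))} {ε : ℝ} {N : ℕ}

lemma HasCover.mono (hT : HasCover T ε N) (hST : S ⊆ T) : HasCover S ε N := by
  obtain ⟨v, hv⟩ := hT
  exact ⟨v, fun s hs => hv s (hST hs)⟩

lemma hasCover_singleton (c : EuclideanSpace ℝ (Fin m)) (hε : 0 ≤ ε) : HasCover {c} ε 1 :=
  ⟨fun _ => c, fun s hs => ⟨0, by simpa [Set.mem_singleton_iff.mp hs] using hε⟩⟩

lemma HasCover.image_of_lipschitz {n : ℕ} (hS : HasCover S ε N)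
    {f : EuclideanSpace ℝ (Fin m) → EuclideanSpace ℝ (Fin n)} {ρ : ℝ}
    (hf : ∀ a b, ‖f a - f b‖ ≤ ρ * ‖a - b‖) (hρ : 0 ≤ ρ) : HasCover (f '' S) (ρ * ε) N := by
  obtain ⟨v, hv⟩ := hS
  refine ⟨f ∘ v, ?_⟩
  rintro _ ⟨s, hs, rfl⟩
  obtain ⟨i, hi⟩ := hv s hs
  exact ⟨i, (hf s (v i)).trans (mul_le_mul_of_nonneg_left hi hρ)⟩

end Cover

lemma le_mul_geom_sum_of_le_add_mul {a : ℕ → ℝ} {c x : ℝ} (hx : 0 ≤ x) (h0 : a 0 ≤ 0)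
    (hstep : ∀ n, a (n + 1) ≤ c + x * a n) (n : ℕ) : a n ≤ c * ∑ k ∈ range n, x ^ k := by
  induction n with
  | zero => simpa using h0
  | succ n ih =>
    calc a (n + 1) ≤ c + x * (c * ∑ k ∈ range n, x ^ k) :=
          (hstep n).trans (add_le_add le_rfl (mul_le_mul_of_nonneg_left ih hx))
      _ = c * ∑ k ∈ range (n + 1), x ^ k := by rw [geom_sum_succ]; ring

section EchoState

variable {dx dh : ℕ} {ρh Bin Brec BX : ℝ}
  {σh : EuclideanSpace ℝ (Fin dh) → EuclideanSpace ℝ (Fin dh)}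
  {Win : Matrix (Fin dh) (Fin dx) ℝ} {Wrec : Matrix (Fin dh) (Fin dh) ℝ}
  {X : ℕ → EuclideanSpace ℝ (Fin dx)} {H : ℕ → EuclideanSpace ℝ (Fin dh)}

lemma norm_hiddenState_succ_le (hρh : 0 ≤ ρh)
    (hσh : ∀ a b, ‖σh a - σh b‖ ≤ ρh * ‖a - b‖) (hσh0 : σh 0 = 0)
    (hWin : frob Win ≤ Bin) (hWrec : frob Wrec ≤ Brec) (hX : ∀ i, ‖X i‖ ≤ BX)
    (hHrec : ∀ i, 1 ≤ i → H i =
      σh (WithLp.toLp 2 (Win *ᵥ X i + Wrec *ᵥ H (i - 1)) : EuclideanSpace ℝ (Fin dh)))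
    (n : ℕ) : ‖H (n + 1)‖ ≤ ρh * Bin * BX + ρh * Brec * ‖H n‖ := by
  have hin : ‖(WithLp.toLp 2 (Win *ᵥ X (n + 1)) : EuclideanSpace ℝ (Fin dh))‖ ≤ Bin * BX :=
    (norm_toLp_mulVec_le_frob_mul _ _).trans <|
      mul_le_mul hWin (hX _) (norm_nonneg _) ((frob_nonneg _).trans hWin)
  have hrec : ‖(WithLp.toLp 2 (Wrec *ᵥ H n) : EuclideanSpace ℝ (Fin dh))‖ ≤ Brec * ‖H n‖ :=
    (norm_toLp_mulVec_le_frob_mul _ _).trans <|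
      mul_le_mul_of_nonneg_right hWrec (norm_nonneg _)
  rw [hHrec (n + 1) n.succ_pos, Nat.add_sub_cancel]
  calc _ ≤ ρh * ‖(WithLp.toLp 2 (Win *ᵥ X (n + 1) + Wrec *ᵥ H n) : EuclideanSpace ℝ (Fin dh))‖ :=
        norm_le_mul_norm_of_lipschitz_of_map_zero hσh hσh0 _
    _ ≤ ρh * (Bin * BX + Brec * ‖H n‖) := by
        rw [WithLp.toLp_add]
        exact mul_le_mul_of_nonneg_left ((norm_add_le _ _).trans (add_le_add hin hrec)) hρh
    _ = _ := by ring

lemma norm_hiddenState_le_geom_sum (hρh : 0 ≤ ρh)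
    (hσh : ∀ a b, ‖σh a - σh b‖ ≤ ρh * ‖a - b‖) (hσh0 : σh 0 = 0)
    (hWin : frob Win ≤ Bin) (hWrec : frob Wrec ≤ Brec) (hX : ∀ i, ‖X i‖ ≤ BX)
    (hH0 : H 0 = 0)
    (hHrec : ∀ i, 1 ≤ i → H i =
      σh (WithLp.toLp 2 (Win *ᵥ X i + Wrec *ᵥ H (i - 1)) : EuclideanSpace ℝ (Fin dh)))
    (t : ℕ) : ‖H t‖ ≤ ρh * Bin * BX * ∑ k ∈ range t, (ρh * Brec) ^ k :=
  le_mul_geom_sum_of_le_add_mul (a := fun n => ‖H n‖) (mul_nonneg hρh ((frob_nonneg _).trans hWrec))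
    (by simp [hH0]) (norm_hiddenState_succ_le hρh hσh hσh0 hWin hWrec hX hHrec) t

end EchoState

theorem stmt_19_general {dx dh dy : ℕ} (t : ℕ)
    (ρh ρy Bin Brec Bout BX ε : ℝ)
    (hρh : 0 ≤ ρh) (hε : 0 < ε)
    (hx : 1 < ρh * Brec)
    (σh : EuclideanSpace ℝ (Fin dh) → EuclideanSpace ℝ (Fin dh))
    (hσh : ∀ a b, ‖σh a - σh b‖ ≤ ρh * ‖a - b‖) (hσh0 : σh 0 = 0)
    (σy : EuclideanSpace ℝ (Fin dy) → EuclideanSpace ℝ (Fin dy))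
    (hσy : ∀ a b, ‖σy a - σy b‖ ≤ ρy * ‖a - b‖)
    (Win : Matrix (Fin dh) (Fin dx) ℝ) (hWin : frob Win ≤ Bin)
    (Wrec : Matrix (Fin dh) (Fin dh) ℝ) (hWrec : frob Wrec ≤ Brec)
    (X : ℕ → EuclideanSpace ℝ (Fin dx)) (hX : ∀ i, ‖X i‖ ≤ BX)
    (H : ℕ → EuclideanSpace ℝ (Fin dh)) (hH0 : H 0 = 0)
    (hHrec : ∀ i, 1 ≤ i → H i =
      σh (WithLp.toLp 2
        (Win.mulVec (X i) + Wrec.mulVec (H (i - 1))) : EuclideanSpace ℝ (Fin dh)))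
    -- Lemma 3.2 of Bartlett et al. (2017), assumed as a hypothesis:
    (bartlett : ∀ (d m : ℕ) (a b ε' : ℝ), 0 < ε' →
      ∀ Z : EuclideanSpace ℝ (Fin d), ‖Z‖ ≤ b →
      ∃ N : ℕ, 0 < N ∧
        HasCover {y : EuclideanSpace ℝ (Fin m) |
          ∃ Wmat : Matrix (Fin m) (Fin d) ℝ, frob Wmat ≤ a ∧
            y = (WithLp.toLp 2 (Wmat.mulVec Z) : EuclideanSpace ℝ (Fin m))} ε' N ∧
        Real.log N ≤ a ^ 2 * b ^ 2 * (m : ℝ) / ε' ^ 2 * Real.log (2 * d * m)) :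
    -- Proposition 2: covering-number bound for the ESN output class
    ∃ N : ℕ, 0 < N ∧
      HasCover {y : EuclideanSpace ℝ (Fin dy) |
        ∃ Wout : Matrix (Fin dy) (Fin dh) ℝ, frob Wout ≤ Bout ∧
          y = σy (WithLp.toLp 2 (Wout.mulVec (H t)) : EuclideanSpace ℝ (Fin dy))} ε N ∧
      Real.log N ≤ ρy ^ 2 * ρh ^ 2 * Bin ^ 2 * BX ^ 2 * Bout ^ 2 * (dy : ℝ) / ε ^ 2 *
        (((ρh * Brec) ^ t - 1) / (ρh * Brec - 1)) ^ 2 * Real.log (2 * dh * dy) := by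
  have hHt : ‖H t‖ ≤ ρh * Bin * BX * (((ρh * Brec) ^ t - 1) / (ρh * Brec - 1)) := by
    rw [← geom_sum_eq hx.ne' t]
    exact norm_hiddenState_le_geom_sum hρh hσh hσh0 hWin hWrec hX hH0 hHrec t
  rcases le_or_gt ρy 0 with hρy | hρy
  · refine ⟨1, one_pos, (hasCover_singleton (σy 0) hε.le).mono ?_, ?_⟩
    · rintro _ ⟨W, -, rfl⟩
      exact map_eq_map_zero_of_lipschitz_of_nonpos hσy hρy _
    · have hlog : 0 ≤ Real.log (2 * dh * dy) := mod_cast Real.log_natCast_nonneg (2 * dh * dy)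
      rw [Nat.cast_one, Real.log_one]
      positivity
  · obtain ⟨N, hN, hcov, hlog⟩ := bartlett dh dy Bout _ (ε / ρy) (div_pos hε hρy) (H t) hHt
    refine ⟨N, hN, ?_, hlog.trans_eq (by field_simp)⟩
    rw [← mul_div_cancel₀ ε hρy.ne']
    refine (hcov.image_of_lipschitz hσy hρy.le).mono ?_
    rintro _ ⟨W, hW, rfl⟩
    exact ⟨_, ⟨W, hW, rfl⟩, rfl⟩

theorem stmt_19 {dx dh dy : ℕ} (t : ℕ)
    (ρh ρy Bin Brec Bout BX ε : ℝ)
    (hρh : 0 ≤ ρh) (hρy : 0 ≤ ρy) (hε : 0 < ε) (hBout : 0 ≤ Bout)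
    (hx : 1 < ρh * Brec)
    (σh : EuclideanSpace ℝ (Fin dh) → EuclideanSpace ℝ (Fin dh))
    (hσh : ∀ a b, ‖σh a - σh b‖ ≤ ρh * ‖a - b‖) (hσh0 : σh 0 = 0)
    (σy : EuclideanSpace ℝ (Fin dy) → EuclideanSpace ℝ (Fin dy))
    (hσy : ∀ a b, ‖σy a - σy b‖ ≤ ρy * ‖a - b‖) (hσy0 : σy 0 = 0)
    (Win : Matrix (Fin dh) (Fin dx) ℝ) (hWin : frob Win ≤ Bin)
    (Wrec : Matrix (Fin dh) (Fin dh) ℝ) (hWrec : frob Wrec ≤ Brec)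
    (X : ℕ → EuclideanSpace ℝ (Fin dx)) (hX : ∀ i, ‖X i‖ ≤ BX)
    (H : ℕ → EuclideanSpace ℝ (Fin dh)) (hH0 : H 0 = 0)
    (hHrec : ∀ i, 1 ≤ i → H i =
      σh (WithLp.toLp 2
        (Win.mulVec (X i) + Wrec.mulVec (H (i - 1))) : EuclideanSpace ℝ (Fin dh)))
    -- Lemma 3.2 of Bartlett et al. (2017), assumed as a hypothesis:
    (bartlett : ∀ (d m : ℕ) (a b ε' : ℝ), 0 < ε' →
      ∀ Z : EuclideanSpace ℝ (Fin d), ‖Z‖ ≤ b →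
      ∃ N : ℕ, 0 < N ∧
        HasCover {y : EuclideanSpace ℝ (Fin m) |
          ∃ Wmat : Matrix (Fin m) (Fin d) ℝ, frob Wmat ≤ a ∧
            y = (WithLp.toLp 2 (Wmat.mulVec Z) : EuclideanSpace ℝ (Fin m))} ε' N ∧
        Real.log N ≤ a ^ 2 * b ^ 2 * (m : ℝ) / ε' ^ 2 * Real.log (2 * d * m)) :
    -- Proposition 2: covering-number bound for the ESN output class
    ∃ N : ℕ, 0 < N ∧
      HasCover {y : EuclideanSpace ℝ (Fin dy) |
        ∃ Wout : Matrix (Fin dy) (Fin dh) ℝ, frob Wout ≤ Bout ∧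
          y = σy (WithLp.toLp 2 (Wout.mulVec (H t)) : EuclideanSpace ℝ (Fin dy))} ε N ∧
      Real.log N ≤ ρy ^ 2 * ρh ^ 2 * Bin ^ 2 * BX ^ 2 * Bout ^ 2 * (dy : ℝ) / ε ^ 2 *
        (((ρh * Brec) ^ t - 1) / (ρh * Brec - 1)) ^ 2 * Real.log (2 * dh * dy) :=
  stmt_19_general t ρh ρy Bin Brec Bout BX ε hρh hε hx σh hσh hσh0 σy hσy Win hWin Wrec hWrec X hX H
    hH0 hHrec bartlett
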